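/- Roytenberg–Weinstein Lemma 5.1 for the Courant bracket on ℝ^d: for all smooth generalized sections e₁, e₂ and every smooth function f : ℝ^d → ℝ, 2 N_c(D_C f, e₁, e₂) = ⟨[e₁,e₂]_C, D_C f⟩_C; explicitly, both sides equal (1/2)[X₁,X₂]^a ∂_a f. -/

import Mathlib

open scoped BigOperators

noncomputable section

/-- Partial derivative ∂_a f at x. -/
def pd {n : ℕ} (f : (Fin n → ℝ) → ℝ) (A : Fin n) (x : Fin n → ℝ) : ℝ :=
  fderiv ℝ f x (Pi.single A 1)

/-- A generalized section (X, ξ) on ℝ^d: a vector field and a 1-form. -/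
abbrev GSec (d : ℕ) := ((Fin d → ℝ) → Fin d → ℝ) × ((Fin d → ℝ) → Fin d → ℝ)

/-- The Courant pairing ⟨e₁,e₂⟩_C = (1/2)(X₁^a ξ_{2a} + X₂^a ξ_{1a}). -/
def pairC {d : ℕ} (e₁ e₂ : GSec d) (x : Fin d → ℝ) : ℝ :=
  (1/2) * (∑ a, e₁.1 x a * e₂.2 x a + ∑ a, e₂.1 x a * e₁.2 x a)

/-- D_C f = (0, df). -/
def DC {d : ℕ} (f : (Fin d → ℝ) → ℝ) : GSec d :=
  (fun _ _ => 0, fun x a => pd f a x)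

/-- The Courant bracket on generalized sections of ℝ^d. -/
def courant {d : ℕ} (e₁ e₂ : GSec d) : GSec d :=
  (fun x b => ∑ a, e₁.1 x a * pd (fun y => e₂.1 y b) a x
            - ∑ a, e₂.1 x a * pd (fun y => e₁.1 y b) a x,
   fun x b => ∑ a, e₁.1 x a * pd (fun y => e₂.2 y b) a x
            - ∑ a, e₂.1 x a * pd (fun y => e₁.2 y b) a x
            + ∑ a, e₂.2 x a * pd (fun y => e₁.1 y a) b x
            - ∑ a, e₁.2 x a * pd (fun y => e₂.1 y a) b x
            - (1/2) * pd (fun y => ∑ a, (e₁.1 y a * e₂.2 y a - e₂.1 y a * e₁.2 y a)) b x)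

/-- The Courant Nijenhuis-type tensor N_c(e₁,e₂,e₃). -/
def Nc {d : ℕ} (e₁ e₂ e₃ : GSec d) (x : Fin d → ℝ) : ℝ :=
  (1/3) * (pairC (courant e₁ e₂) e₃ x + pairC (courant e₂ e₃) e₁ x
            + pairC (courant e₃ e₁) e₂ x)

@[simp] lemma pd_const {n : ℕ} (c : ℝ) (a : Fin n) (x : Fin n → ℝ) :
    pd (fun _ => c) a x = 0 := by simp [pd]

lemma pd_neg {n : ℕ} (g : (Fin n → ℝ) → ℝ) (a : Fin n) (x : Fin n → ℝ) :
    pd (fun y => -g y) a x = -pd g a x := by simp [pd, fderiv_neg]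

lemma pd_sum {n : ℕ} {ι : Type*} (s : Finset ι) (g : ι → (Fin n → ℝ) → ℝ)
    (a : Fin n) (x : Fin n → ℝ) (h : ∀ i ∈ s, DifferentiableAt ℝ (g i) x) :
    pd (fun y => ∑ i ∈ s, g i y) a x = ∑ i ∈ s, pd (g i) a x := by
  unfold pd
  rw [fderiv_fun_sum h]
  simp

lemma pd_mul {n : ℕ} {g h : (Fin n → ℝ) → ℝ} (a : Fin n) (x : Fin n → ℝ)
    (hg : DifferentiableAt ℝ g x) (hh : DifferentiableAt ℝ h x) :
    pd (fun y => g y * h y) a x = pd g a x * h x + g x * pd h a x := by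
  unfold pd
  rw [fderiv_fun_mul hg hh]
  simp [mul_comm]
  ring

lemma contDiff_pd {n : ℕ} {f : (Fin n → ℝ) → ℝ} (hf : ContDiff ℝ (⊤ : ℕ∞) f) (a : Fin n) :
    ContDiff ℝ ((⊤:ℕ∞):WithTop ℕ∞) (fun y => pd f a y) := by
  have h1 : ContDiff ℝ ((⊤:ℕ∞):WithTop ℕ∞) (fderiv ℝ f) :=
    (contDiff_infty_iff_fderiv.mp (hf.of_le (by simp))).2
  exact h1.clm_apply contDiff_const

lemma pd_comm {n : ℕ} {f : (Fin n → ℝ) → ℝ} (hf : ContDiff ℝ (⊤ : ℕ∞) f) (a b : Fin n)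
    (x : Fin n → ℝ) :
    pd (fun y => pd f b y) a x = pd (fun y => pd f a y) b x := by
  have hdf : Differentiable ℝ f := hf.differentiable (by simp)
  have h2 : DifferentiableAt ℝ (fderiv ℝ f) x :=
    (((contDiff_infty_iff_fderiv.mp (hf.of_le (by simp))).2).differentiable
      (by simp)).differentiableAt
  have key : ∀ v w, fderiv ℝ (fun y => fderiv ℝ f y v) x w
      = fderiv ℝ (fderiv ℝ f) x w v := by
    intro v w
    rw [fderiv_clm_apply h2 (differentiableAt_const v)]
    simp
  unfold pd
  rw [key, key]
  exact second_derivative_symmetric (fun y => (hdf y).hasFDerivAt) h2.hasFDerivAt _ _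

lemma pd_sum_mul {n : ℕ} (u v : Fin n → (Fin n → ℝ) → ℝ) (b : Fin n) (x : Fin n → ℝ)
    (hu : ∀ a, DifferentiableAt ℝ (u a) x) (hv : ∀ a, DifferentiableAt ℝ (v a) x) :
    pd (fun y => ∑ a, u a y * v a y) b x
      = ∑ a, (pd (u a) b x * v a x + u a x * pd (v a) b x) := by
  rw [pd_sum _ (g := fun a y => u a y * v a y) _ _ (fun a _ => ((hu a).mul (hv a)))]
  exact Finset.sum_congr rfl fun a _ => pd_mul b x (hu a) (hv a)

lemma alg {d : ℕ} (A B F : Fin d → ℝ) (H DA DB : Fin d → Fin d → ℝ)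
    (hH : ∀ a b, H a b = H b a) :
    (1/2) * (∑ b, B b * (-(1/2) * ∑ a, (A a * H b a + F a * DA a b)))
      + (1/2) * (∑ b, A b * ((1/2) * ∑ a, (B a * H b a + F a * DB a b)))
    = (1/2) * ((1/2) * ∑ a, (∑ c, A c * DB a c - ∑ c, B c * DA a c) * F a) := by
  have split : (1/2) * (∑ b, B b * (-(1/2) * ∑ a, (A a * H b a + F a * DA a b)))
      + (1/2) * (∑ b, A b * ((1/2) * ∑ a, (B a * H b a + F a * DB a b)))
      = ((1/4) * ∑ b, ∑ a, A b * (B a * H b a) - (1/4) * ∑ b, ∑ a, B b * (A a * H b a))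
        + ((1/4) * ∑ b, ∑ a, A b * (F a * DB a b) - (1/4) * ∑ b, ∑ a, B b * (F a * DA a b)) := by
    simp only [Finset.mul_sum, ← Finset.sum_add_distrib, ← Finset.sum_sub_distrib]
    exact Finset.sum_congr rfl fun b _ => Finset.sum_congr rfl fun a _ => by ring
  rw [split]
  have h1 : (∑ b, ∑ a, B b * (A a * H b a)) = ∑ b, ∑ a, A b * (B a * H b a) := by
    rw [Finset.sum_comm]
    exact Finset.sum_congr rfl fun b _ => Finset.sum_congr rfl fun a _ => by rw [hH b a]; ring
  rw [h1, sub_self, zero_add]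
  have rhs : (1/2) * ((1/2) * ∑ a, (∑ c, A c * DB a c - ∑ c, B c * DA a c) * F a)
      = (1/4) * ∑ a, ∑ c, A c * (F a * DB a c) - (1/4) * ∑ a, ∑ c, B c * (F a * DA a c) := by
    simp only [sub_mul, Finset.sum_mul, Finset.mul_sum, ← Finset.sum_sub_distrib]
    exact Finset.sum_congr rfl fun a _ => Finset.sum_congr rfl fun c _ => by ring
  rw [rhs, Finset.sum_comm (f := fun a c => A c * (F a * DB a c)),
    Finset.sum_comm (f := fun a c => B c * (F a * DA a c))]

/-- Roytenberg–Weinstein Lemma 5.1 for the Courant bracket on ℝ^d. -/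
theorem courant_lemma51 {d : ℕ} (hd : 1 ≤ d) (e₁ e₂ : GSec d) (f : (Fin d → ℝ) → ℝ)
    (he₁X : ContDiff ℝ (⊤ : ℕ∞) e₁.1) (he₁ξ : ContDiff ℝ (⊤ : ℕ∞) e₁.2)
    (he₂X : ContDiff ℝ (⊤ : ℕ∞) e₂.1) (he₂ξ : ContDiff ℝ (⊤ : ℕ∞) e₂.2) (hf : ContDiff ℝ (⊤ : ℕ∞) f) :
    ∀ x : Fin d → ℝ,
      2 * Nc (DC f) e₁ e₂ x = pairC (courant e₁ e₂) (DC f) x ∧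
      pairC (courant e₁ e₂) (DC f) x
        = (1/2) * ∑ a, (courant e₁ e₂).1 x a * pd f a x := by
  intro x
  have hX1 : ∀ a, DifferentiableAt ℝ (fun y => e₁.1 y a) x :=
    fun a => ((contDiff_pi.mp he₁X a).differentiable (by simp)) x
  have hX2 : ∀ a, DifferentiableAt ℝ (fun y => e₂.1 y a) x :=
    fun a => ((contDiff_pi.mp he₂X a).differentiable (by simp)) x
  have hpdf : ∀ a, DifferentiableAt ℝ (fun y => pd f a y) x :=
    fun a => ((contDiff_pd hf a).differentiable (by simp)) x
  constructor
  · -- main identity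
    -- vector parts of the mixed brackets vanish
    have L1 : ∀ b, (courant (DC f) e₁).1 x b = 0 := by
      intro b
      show (∑ a, (0:ℝ) * pd (fun y => e₁.1 y b) a x)
          - ∑ a, e₁.1 x a * pd (fun y => (0:ℝ)) a x = 0
      simp
    have L2 : ∀ b, (courant e₂ (DC f)).1 x b = 0 := by
      intro b
      show (∑ a, e₂.1 x a * pd (fun y => (0:ℝ)) a x)
          - ∑ a, (0:ℝ) * pd (fun y => e₂.1 y b) a x = 0
      simp
    have L3 : ∀ b, (courant (DC f) e₁).2 x b
        = -(1/2) * ∑ a, (e₁.1 x a * pd (fun y => pd f b y) a x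
            + pd f a x * pd (fun y => e₁.1 y a) b x) := by
      intro b
      show (∑ a, (0:ℝ) * pd (fun y => e₁.2 y b) a x)
          - (∑ a, e₁.1 x a * pd (fun y => pd f b y) a x)
          + (∑ a, e₁.2 x a * pd (fun y => (0:ℝ)) b x)
          - (∑ a, pd f a x * pd (fun y => e₁.1 y a) b x)
          - (1/2) * pd (fun y => ∑ a, ((0:ℝ) * e₁.2 y a - e₁.1 y a * pd f a y)) b x = _
      have e1 : (fun y => ∑ a, ((0:ℝ) * e₁.2 y a - e₁.1 y a * pd f a y))
          = fun y => -∑ a, e₁.1 y a * pd f a y := by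
        funext y
        rw [← Finset.sum_neg_distrib]
        exact Finset.sum_congr rfl fun a _ => by ring
      rw [e1, pd_neg, pd_sum_mul _ _ _ _ hX1 hpdf]
      have hc : (∑ a, (pd (fun y => e₁.1 y a) b x * pd f a x
            + e₁.1 x a * pd (fun y => pd f a y) b x))
          = ∑ a, (pd f a x * pd (fun y => e₁.1 y a) b x
            + e₁.1 x a * pd (fun y => pd f b y) a x) := by
        refine Finset.sum_congr rfl fun a _ => ?_
        rw [← pd_comm hf a b x]; ring
      rw [hc]
      simp only [Finset.sum_add_distrib, Finset.mul_sum]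
      simp
      ring
    have L4 : ∀ b, (courant e₂ (DC f)).2 x b
        = (1/2) * ∑ a, (e₂.1 x a * pd (fun y => pd f b y) a x
            + pd f a x * pd (fun y => e₂.1 y a) b x) := by
      intro b
      show (∑ a, e₂.1 x a * pd (fun y => pd f b y) a x)
          - (∑ a, (0:ℝ) * pd (fun y => e₂.2 y b) a x)
          + (∑ a, pd f a x * pd (fun y => e₂.1 y a) b x)
          - (∑ a, e₂.2 x a * pd (fun y => (0:ℝ)) b x)
          - (1/2) * pd (fun y => ∑ a, (e₂.1 y a * pd f a y - (0:ℝ) * e₂.2 y a)) b x = _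
      have e1 : (fun y => ∑ a, (e₂.1 y a * pd f a y - (0:ℝ) * e₂.2 y a))
          = fun y => ∑ a, e₂.1 y a * pd f a y := by
        funext y
        exact Finset.sum_congr rfl fun a _ => by ring
      rw [e1, pd_sum_mul _ _ _ _ hX2 hpdf]
      have hc : (∑ a, (pd (fun y => e₂.1 y a) b x * pd f a x
            + e₂.1 x a * pd (fun y => pd f a y) b x))
          = ∑ a, (pd f a x * pd (fun y => e₂.1 y a) b x
            + e₂.1 x a * pd (fun y => pd f b y) a x) := by
        refine Finset.sum_congr rfl fun a _ => ?_
        rw [← pd_comm hf a b x]; ring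
      rw [hc]
      simp only [Finset.sum_add_distrib, Finset.mul_sum]
      simp
      ring
    have key : pairC (courant (DC f) e₁) e₂ x + pairC (courant e₂ (DC f)) e₁ x
        = (1/2) * pairC (courant e₁ e₂) (DC f) x := by
      have s1 : ∑ a, (courant (DC f) e₁).1 x a * e₂.2 x a = 0 :=
        Finset.sum_eq_zero fun a _ => by rw [L1 a, zero_mul]
      have s2 : ∑ b, e₂.1 x b * (courant (DC f) e₁).2 x b
          = ∑ b, e₂.1 x b * (-(1/2) * ∑ a, (e₁.1 x a * pd (fun y => pd f b y) a x
              + pd f a x * pd (fun y => e₁.1 y a) b x)) :=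
        Finset.sum_congr rfl fun b _ => by rw [L3 b]
      have s3 : ∑ a, (courant e₂ (DC f)).1 x a * e₁.2 x a = 0 :=
        Finset.sum_eq_zero fun a _ => by rw [L2 a, zero_mul]
      have s4 : ∑ b, e₁.1 x b * (courant e₂ (DC f)).2 x b
          = ∑ b, e₁.1 x b * ((1/2) * ∑ a, (e₂.1 x a * pd (fun y => pd f b y) a x
              + pd f a x * pd (fun y => e₂.1 y a) b x)) :=
        Finset.sum_congr rfl fun b _ => by rw [L4 b]
      have s5 : ∑ a, (DC f).1 x a * (courant e₁ e₂).2 x a = 0 :=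
        Finset.sum_eq_zero fun a _ => by
          show (0:ℝ) * _ = 0
          rw [zero_mul]
      have s6 : ∑ a, (courant e₁ e₂).1 x a * (DC f).2 x a
          = ∑ a, (∑ c, e₁.1 x c * pd (fun y => e₂.1 y a) c x
              - ∑ c, e₂.1 x c * pd (fun y => e₁.1 y a) c x) * pd f a x :=
        Finset.sum_congr rfl fun a _ => rfl
      unfold pairC
      rw [s1, s2, s3, s4, s5, s6, zero_add, zero_add, add_zero]
      exact alg (e₁.1 x) (e₂.1 x) (fun a => pd f a x)
        (fun b a => pd (fun y => pd f b y) a x)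
        (fun a b => pd (fun y => e₁.1 y a) b x)
        (fun a b => pd (fun y => e₂.1 y a) b x)
        (fun a b => (pd_comm hf a b x).symm)
    unfold Nc
    linarith [key]
  · -- second identity
    simp [pairC, DC]
end
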